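/- Let X = x_1 + ... + x_n be a sum of independent real random variables, let F(t) = Pr[X > t], and let m = max_i (sup x_i - inf x_i). Then for any reals b ≤ c ≤ d, we have F(d)·F(b) ≤ F(c)·F(b+d-c-m). -/

import Mathlib

open MeasureTheory ProbabilityTheory Set Measure
open scoped ENNReal

/-!
Work with laws on `ℝ`: the law of `x + Y` for independent `x`, `Y` is the convolution, whose tail
is `t ↦ ∫ Pr[Y > t - r] dPr_x(r)`. Induct on the number of summands, starting from the point
mass at `0`. If `d - c ≤ m` the inequality is just monotonicity of the tail. Otherwise any two
values `r, r'` of `x` satisfy `c - r' ≤ d - r`, so the inequality for the tail of `Y` at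
`b - r' ≤ c - r' ≤ d - r` holds pointwise and integrates over `r` and `r'` to the one for `x + Y`.
-/

def LogConcaveUpTo (m : ℝ) (G : ℝ → ℝ≥0∞) : Prop :=
  ∀ ⦃b c d : ℝ⦄, b ≤ c → c ≤ d → G d * G b ≤ G c * G (b + d - c - m)

theorem logConcaveUpTo_dirac_Ioi {m : ℝ} (hm : 0 ≤ m) (a : ℝ) :
    LogConcaveUpTo m (fun t ↦ dirac a (Ioi t)) := by
  intro b c d hbc hcd
  by_cases hd : d < a
  · have hc : a ∈ Ioi c := show c < a by linarith
    have hbdcm : a ∈ Ioi (b + d - c - m) := show b + d - c - m < a by linarith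
    simp only [dirac_apply_of_mem hc, dirac_apply_of_mem hbdcm, one_mul]
    exact mul_le_one' prob_le_one prob_le_one
  · simp [dirac_apply' a measurableSet_Ioi, hd]

theorem LogConcaveUpTo.lintegral_comp_sub {m lo : ℝ} {G : ℝ → ℝ≥0∞} (hG : LogConcaveUpTo m G)
    (hanti : Antitone G) {ν : Measure ℝ} (hν : ∀ᵐ r ∂ν, r ∈ Icc lo (lo + m)) :
    LogConcaveUpTo m (fun t ↦ ∫⁻ r, G (t - r) ∂ν) := by
  intro b c d hbc hcd
  have hint_anti : Antitone (fun t ↦ ∫⁻ r, G (t - r) ∂ν) :=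
    fun s t hst ↦ lintegral_mono fun r ↦ hanti (by linarith)
  by_cases hdc : d - c ≤ m
  · exact mul_le_mul' (hint_anti hcd) (hint_anti (by linarith))
  have hGm : ∀ u, Measurable fun r ↦ G (u - r) :=
    fun u ↦ hanti.measurable.comp (measurable_const.sub measurable_id)
  have pointwise : ∀ᵐ r ∂ν, G (d - r) * ∫⁻ t, G (b - t) ∂ν ≤
      (∫⁻ t, G (c - t) ∂ν) * G (b + d - c - m - r) := by
    filter_upwards [hν] with r hr
    rw [← lintegral_const_mul _ (hGm b), ← lintegral_mul_const _ (hGm c)]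
    refine lintegral_mono_ae (hν.mono fun t ht ↦ ?_)
    have h := hG (b := b - t) (c := c - t) (d := d - r) (by linarith)
      (by linarith [hr.1, hr.2, ht.1, ht.2])
    rwa [show b - t + (d - r) - (c - t) - m = b + d - c - m - r by ring] at h
  calc (∫⁻ r, G (d - r) ∂ν) * ∫⁻ t, G (b - t) ∂ν
      = ∫⁻ r, G (d - r) * ∫⁻ t, G (b - t) ∂ν ∂ν := (lintegral_mul_const _ (hGm d)).symm
    _ ≤ ∫⁻ r, (∫⁻ t, G (c - t) ∂ν) * G (b + d - c - m - r) ∂ν := lintegral_mono_ae pointwise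
    _ = (∫⁻ t, G (c - t) ∂ν) * ∫⁻ r, G (b + d - c - m - r) ∂ν :=
        lintegral_const_mul _ (hGm (b + d - c - m))

theorem MeasureTheory.Measure.conv_apply_Ioi (ν ρ : Measure ℝ) [SFinite ρ] (t : ℝ) :
    (ν ∗ ρ) (Ioi t) = ∫⁻ r, ρ (Ioi (t - r)) ∂ν := by
  rw [← lintegral_indicator_one measurableSet_Ioi,
    Measure.lintegral_conv (measurable_one.indicator measurableSet_Ioi)]
  refine lintegral_congr fun r ↦ ?_
  rw [← lintegral_indicator_one measurableSet_Ioi]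
  refine lintegral_congr fun y ↦ ?_
  simp only [indicator, mem_Ioi, sub_lt_iff_lt_add', Pi.one_apply]

theorem logConcaveUpTo_conv_Ioi {m lo : ℝ} {ν ρ : Measure ℝ} [SFinite ρ]
    (hρ : LogConcaveUpTo m (fun t ↦ ρ (Ioi t))) (hν : ∀ᵐ r ∂ν, r ∈ Icc lo (lo + m)) :
    LogConcaveUpTo m (fun t ↦ (ν ∗ ρ) (Ioi t)) := by
  simp only [conv_apply_Ioi]
  exact hρ.lintegral_comp_sub (fun s t hst ↦ measure_mono (Ioi_subset_Ioi hst)) hν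

theorem logConcaveUpTo_map_sum {Ω ι : Type*} [MeasurableSpace Ω] {μ : Measure Ω}
    [IsProbabilityMeasure μ] {x : ι → Ω → ℝ} (hmeas : ∀ i, Measurable (x i))
    (hindep : iIndepFun x μ) {m : ℝ} (hm : 0 ≤ m) (lo : ι → ℝ)
    (hx : ∀ i ω, x i ω ∈ Icc (lo i) (lo i + m)) (s : Finset ι) :
    LogConcaveUpTo m (fun t ↦ μ.map (∑ i ∈ s, x i) (Ioi t)) := by
  induction s using Finset.cons_induction with
  | empty =>
    rw [Finset.sum_empty, Pi.zero_def, Measure.map_const, measure_univ, one_smul]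
    exact logConcaveUpTo_dirac_Ioi hm 0
  | cons a s ha ih =>
    have hindep_a : IndepFun (x a) (∑ i ∈ s, x i) μ :=
      (hindep.indepFun_finsetSum_of_notMem hmeas ha).symm
    have hsupp : ∀ᵐ r ∂μ.map (x a), r ∈ Icc (lo a) (lo a + m) :=
      (ae_map_iff (hmeas a).aemeasurable measurableSet_Icc).mpr (ae_of_all _ (hx a))
    rw [Finset.sum_cons, hindep_a.map_add_eq_map_conv_map (hmeas a) (by fun_prop)]
    exact logConcaveUpTo_conv_Ioi ih hsupp

theorem log_concavity_lemma {Ω : Type*} [MeasurableSpace Ω]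
    (μ : Measure Ω) [IsProbabilityMeasure μ]
    (n : ℕ) (hn : 0 < n) (x : Fin n → Ω → ℝ)
    (hmeas : ∀ i, Measurable (x i))
    (hindep : iIndepFun x μ)
    (hbdd : ∀ i, BddAbove (Set.range (x i)) ∧ BddBelow (Set.range (x i)))
    (m : ℝ)
    (hm : m = Finset.univ.sup' ⟨⟨0, hn⟩, Finset.mem_univ _⟩
      (fun i => sSup (Set.range (x i)) - sInf (Set.range (x i))))
    (F : ℝ → ℝ) (hF : ∀ t, F t = (μ {ω | t < ∑ i, x i ω}).toReal)
    (b c d : ℝ) (hbc : b ≤ c) (hcd : c ≤ d) :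
    F d * F b ≤ F c * F (b + d - c - m) := by
  obtain ⟨ω₀⟩ := nonempty_of_isProbabilityMeasure μ
  have hx : ∀ i ω, x i ω ∈ Icc (sInf (range (x i))) (sInf (range (x i)) + m) := by
    intro i ω
    have hrange : sSup (range (x i)) - sInf (range (x i)) ≤ m :=
      hm ▸ Finset.le_sup' (fun i ↦ sSup (range (x i)) - sInf (range (x i))) (Finset.mem_univ i)
    have hle_sup := le_csSup (hbdd i).1 (mem_range_self ω)
    exact ⟨csInf_le (hbdd i).2 (mem_range_self ω), by linarith⟩
  have hm0 : 0 ≤ m := by linarith [(hx ⟨0, hn⟩ ω₀).1, (hx ⟨0, hn⟩ ω₀).2]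
  have hF_map : ∀ t, F t = (μ.map (∑ i, x i) (Ioi t)).toReal := by
    intro t
    rw [hF, map_apply (by fun_prop) measurableSet_Ioi]
    simp only [preimage, mem_Ioi, Finset.sum_apply]
  simp only [hF_map, ← ENNReal.toReal_mul]
  exact ENNReal.toReal_mono (by finiteness)
    (logConcaveUpTo_map_sum hmeas hindep hm0 _ hx Finset.univ hbc hcd)
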